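/- Let m ≥ 2 and let k, r be integers with 1 ≤ k ≤ r < 2k−1. Then the number of paths of length t = 2k−1 in the perfect rooted m-ary tree of depth r equals m^(2k−2) · ( (m^(r−k+2) − 1)/(m−1) − (r−k+2) ). -/

import Mathlib

open SimpleGraph Finset

/-- `IsPerfectRootedMary m r H ρ` says that `H` is the perfect rooted `m`-ary tree of
depth `r` with root `ρ`: a tree whose root `ρ` has degree `m`, in which every other
vertex has degree `1` or `m + 1`, whose maximum distance from `ρ` to a vertex is `r`,
and in which every degree-`1` vertex is at distance exactly `r` from `ρ`.
(For `r = 0` the root-degree condition is dropped, so that the one-vertex tree is the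
perfect rooted tree of depth `0`.) -/
def IsPerfectRootedMary (m r : ℕ) {W : Type} [Fintype W] (H : SimpleGraph W)
    [DecidableRel H.Adj] (ρ : W) : Prop :=
  H.IsTree ∧
    (0 < r → H.degree ρ = m) ∧
    (∀ v : W, v ≠ ρ → H.degree v = 1 ∨ H.degree v = m + 1) ∧
    (∀ v : W, H.dist ρ v ≤ r) ∧
    (∃ v : W, H.dist ρ v = r) ∧
    (∀ v : W, H.degree v = 1 → H.dist ρ v = r)

/-- The number of paths of length `t` in `H`, i.e. the number of unordered pairs of
vertices at distance exactly `t` from each other. -/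
noncomputable def pathCount {W : Type} [Fintype W] [DecidableEq W] (H : SimpleGraph W) (t : ℕ) : ℕ :=
  (Finset.univ.filter fun p : Sym2 W => ∃ u v : W, p = s(u, v) ∧ H.dist u v = t).card

/-!
Root the tree at `ρ` and let `parent` send every other vertex to its unique neighbour closer to
`ρ`. If the ancestor chains of `u` and `v` first meet at `w`, with `u` lying `a + 1` and `v`
lying `b + 1` levels below `w`, then `dist u v = a + b + 2`: a walk from `u` that leaves the
subtree of the child of `w` above `u` has to use the edge from that child to `w`.

Every vertex has depth at most `r < t`, so of two vertices at distance `t` neither is an ancestor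
of the other, and the ordered pairs at distance `t` are partitioned by their branch vertex `w`
and the relative depth `a + 1` of `u`. For `w` at depth `d` and each admissible `a` there are
`m ^ (a + 1) * m ^ (b + 1) - m * m ^ a * m ^ b = m ^ t - m ^ (t - 1)` such pairs, and
`2 (r - d) + 1 - t` values of `a` are admissible. Summing over the `m ^ d` vertices at each
depth `d` and halving leaves a sum `∑ m ^ d (r - k + 1 - d)`, evaluated in closed form.
-/

lemma two_mul_pathCount {W : Type} [Fintype W] [DecidableEq W] (G : SimpleGraph W) {t : ℕ}
    (ht : t ≠ 0) : 2 * pathCount G t = #({p : W × W | G.dist p.1 p.2 = t} : Finset _) := by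
  set S : Finset (W × W) := {p | G.dist p.1 p.2 = t}
  have himage : S.image Sym2.mk.uncurry =
      univ.filter fun z : Sym2 W => ∃ u v, z = s(u, v) ∧ G.dist u v = t := by
    ext z
    induction z using Sym2.ind with
    | h u v =>
      simp only [mem_image, mem_filter, mem_univ, true_and, S, Prod.exists,
        Function.uncurry_apply_pair, Sym2.eq_iff]
      grind
  have hfiber :
      ∀ z ∈ S.image Sym2.mk.uncurry, #(S.filter fun p => Sym2.mk.uncurry p = z) = 2 := by
    intro z hz
    obtain ⟨⟨u, v⟩, huv, rfl⟩ := mem_image.1 hz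
    have huv : G.dist u v = t := (mem_filter.1 huv).2
    have hne : u ≠ v := by
      rintro rfl
      simp [eq_comm, ht] at huv
    rw [show S.filter (fun p => Sym2.mk.uncurry p = Sym2.mk.uncurry (u, v)) =
        {(u, v), (v, u)} by
      ext ⟨x, y⟩
      simp only [S, Function.uncurry_apply_pair, mem_insert, mem_singleton, Prod.mk.injEq]
      grind [SimpleGraph.dist_comm]]
    exact card_pair fun h => hne (Prod.mk.inj h).1
  rw [pathCount, ← himage, card_eq_sum_card_image Sym2.mk.uncurry S, sum_const_nat hfiber,
    mul_comm]

lemma sub_one_sq_mul_sum_range_pow_mul {R : Type*} [CommRing R] (x : R) (s : ℕ) :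
    (x - 1) ^ 2 * ∑ d ∈ range (s + 1), x ^ d * ((s : R) + 1 - d) =
      x ^ (s + 2) - 1 - ((s : R) + 2) * (x - 1) := by
  induction s with
  | zero => rw [sum_range_one]; push_cast; ring
  | succ s ih =>
    have hsplit : ∑ d ∈ range (s + 1), x ^ d * (((s + 1 : ℕ) : R) + 1 - d) =
        ∑ d ∈ range (s + 1), x ^ d * ((s : R) + 1 - d) + ∑ d ∈ range (s + 1), x ^ d := by
      rw [← sum_add_distrib]
      exact sum_congr rfl fun d _ => by push_cast; ring
    rw [sum_range_succ, hsplit]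
    push_cast at ih ⊢
    linear_combination ih + (x - 1) * geom_sum_mul x (s + 1)

namespace SimpleGraph

variable {W : Type} {G : SimpleGraph W} {ρ u v w x y : W}

open Classical in
noncomputable def parent (G : SimpleGraph W) (ρ v : W) : W :=
  if h : ∃ w, G.Adj v w ∧ G.dist ρ w + 1 = G.dist ρ v then h.choose else ρ

/-- The depth condition matters when `w = ρ`, since the iteration of `parent` stalls at `ρ`. -/
def IsDescendant (G : SimpleGraph W) (ρ w : W) (a : ℕ) (u : W) : Prop :=
  (G.parent ρ)^[a] u = w ∧ G.dist ρ u = G.dist ρ w + a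

lemma IsDescendant.trans {c : W} {a b : ℕ} (hu : G.IsDescendant ρ c a u)
    (hc : G.IsDescendant ρ w b c) : G.IsDescendant ρ w (a + b) u := by
  refine ⟨?_, by rw [hu.2, hc.2]; ring⟩
  rw [add_comm, Function.iterate_add_apply, hu.1, hc.1]

@[simp]
lemma parent_root : G.parent ρ ρ = ρ := by
  simp [parent]

namespace Connected

variable (hG : G.Connected)
include hG

lemma exists_adj_dist_add_one (hv : v ≠ ρ) :
    ∃ w, G.Adj v w ∧ G.dist ρ w + 1 = G.dist ρ v := by
  obtain ⟨p, hp⟩ := hG.exists_walk_length_eq_dist v ρ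
  obtain ⟨w, hvw, q, rfl⟩ := Walk.exists_eq_cons_of_ne hv p
  have hq : G.dist w ρ ≤ q.length := G.dist_le q
  have htri : G.dist v ρ ≤ G.dist v w + G.dist w ρ := hG.dist_triangle
  rw [Walk.length_cons] at hp
  rw [dist_eq_one_iff_adj.2 hvw] at htri
  refine ⟨w, hvw, ?_⟩
  rw [dist_comm (u := ρ), dist_comm (u := ρ)]
  omega

lemma adj_parent (hv : v ≠ ρ) : G.Adj v (G.parent ρ v) := by
  have h := hG.exists_adj_dist_add_one hv
  simpa [parent, h] using h.choose_spec.1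

lemma dist_parent_add_one (hv : v ≠ ρ) : G.dist ρ (G.parent ρ v) + 1 = G.dist ρ v := by
  have h := hG.exists_adj_dist_add_one hv
  simpa [parent, h] using h.choose_spec.2

lemma dist_parent_le : G.dist v (G.parent ρ v) ≤ 1 := by
  by_cases hv : v = ρ
  · simp [hv]
  · exact (dist_eq_one_iff_adj.2 (hG.adj_parent hv)).le

lemma dist_iterate_parent_add {i : ℕ} (hi : i ≤ G.dist ρ v) :
    G.dist ρ ((G.parent ρ)^[i] v) + i = G.dist ρ v := by
  induction i with
  | zero => rfl
  | succ i ih =>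
    have hne : (G.parent ρ)^[i] v ≠ ρ := by
      intro h
      have := ih (by omega)
      simp [h] at this
      omega
    rw [Function.iterate_succ_apply', ← ih (by omega), ← hG.dist_parent_add_one hne]
    ring

lemma iterate_parent_dist : (G.parent ρ)^[G.dist ρ v] v = ρ := by
  have := hG.dist_iterate_parent_add (ρ := ρ) (v := v) le_rfl
  exact (hG.dist_eq_zero_iff.1 (by omega)).symm

lemma dist_iterate_parent_le (i : ℕ) : G.dist v ((G.parent ρ)^[i] v) ≤ i := by
  induction i with
  | zero => simp
  | succ i ih =>
    rw [Function.iterate_succ_apply']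
    have := hG.dist_parent_le (ρ := ρ) (v := (G.parent ρ)^[i] v)
    exact (hG.dist_triangle (v := (G.parent ρ)^[i] v)).trans (by omega)

lemma isDescendant_add_iff {a b : ℕ} :
    G.IsDescendant ρ w (a + b) u ↔
      G.IsDescendant ρ ((G.parent ρ)^[a] u) a u ∧
        G.IsDescendant ρ w b ((G.parent ρ)^[a] u) := by
  refine ⟨fun ⟨hw, hu⟩ => ?_, fun ⟨⟨_, hu⟩, hw, hc⟩ => ?_⟩
  · have := hG.dist_iterate_parent_add (ρ := ρ) (v := u) (i := a) (by omega)
    refine ⟨⟨rfl, by omega⟩, ?_, by omega⟩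
    rwa [← Function.iterate_add_apply, add_comm]
  · refine ⟨?_, by omega⟩
    rwa [add_comm, Function.iterate_add_apply]

lemma exists_ancestor_or_branch (u v : W) :
    (∃ i ≤ G.dist ρ v, (G.parent ρ)^[i] v = u) ∨
      (∃ i ≤ G.dist ρ u, (G.parent ρ)^[i] u = v) ∨
      ∃ w a b, G.IsDescendant ρ w (a + 1) u ∧ G.IsDescendant ρ w (b + 1) v ∧
        (G.parent ρ)^[a] u ≠ (G.parent ρ)^[b] v := by
  classical
  set P := fun c => (G.parent ρ)^[G.dist ρ u - c] u = (G.parent ρ)^[G.dist ρ v - c] v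
  set c := Nat.findGreatest P (min (G.dist ρ u) (G.dist ρ v))
  have hc : (G.parent ρ)^[G.dist ρ u - c] u = (G.parent ρ)^[G.dist ρ v - c] v :=
    Nat.findGreatest_spec (P := P) (Nat.zero_le _) <| by
      simp only [P, Nat.sub_zero, hG.iterate_parent_dist]
  have hcle : c ≤ min (G.dist ρ u) (G.dist ρ v) := Nat.findGreatest_le _
  have hu := hG.dist_iterate_parent_add (ρ := ρ) (v := u) (i := G.dist ρ u - c) (by omega)
  have hv := hG.dist_iterate_parent_add (ρ := ρ) (v := v) (i := G.dist ρ v - c) (by omega)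
  by_cases hcu : G.dist ρ u = c
  · refine Or.inl ⟨G.dist ρ v - c, by omega, ?_⟩
    simpa [hcu] using hc.symm
  by_cases hcv : G.dist ρ v = c
  · refine Or.inr (Or.inl ⟨G.dist ρ u - c, by omega, ?_⟩)
    simpa [hcv] using hc
  have hsucc : ¬ P (c + 1) := Nat.findGreatest_is_greatest (Nat.lt_succ_self c) (by omega)
  refine Or.inr (Or.inr ⟨(G.parent ρ)^[G.dist ρ u - c] u, G.dist ρ u - c - 1,
    G.dist ρ v - c - 1, ⟨?_, ?_⟩, ⟨?_, ?_⟩, ?_⟩)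
  · rw [Nat.sub_add_cancel (by omega)]
  · omega
  · rw [Nat.sub_add_cancel (by omega)]
    exact hc.symm
  · rw [hc]
    omega
  · simpa only [P, Nat.sub_sub] using hsucc

end Connected

namespace IsTree

variable (hT : G.IsTree)
include hT

lemma eq_of_adj_of_dist_add_one {y' : W} (hy : G.Adj y x) (hy' : G.Adj y' x)
    (h : G.dist ρ y + 1 = G.dist ρ x) (h' : G.dist ρ y' + 1 = G.dist ρ x) : y = y' := by
  obtain ⟨p, hp⟩ := hT.connected.exists_walk_length_eq_dist ρ y
  obtain ⟨q, hq⟩ := hT.connected.exists_walk_length_eq_dist ρ y'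
  have hpath : (p.concat hy).IsPath := Walk.isPath_of_length_eq_dist _ (by simp [hp, h])
  have hpath' : (q.concat hy').IsPath := Walk.isPath_of_length_eq_dist _ (by simp [hq, h'])
  simpa [Walk.penultimate_concat] using
    congrArg Walk.penultimate ((hT.existsUnique_path ρ x).unique hpath hpath')

lemma parent_eq_of_adj (hxy : G.Adj x y) (h : G.dist ρ y + 1 = G.dist ρ x) :
    G.parent ρ x = y := by
  have hx : x ≠ ρ := by
    rintro rfl
    simp at h
  exact hT.eq_of_adj_of_dist_add_one (hT.connected.adj_parent hx).symm hxy.symm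
    (hT.connected.dist_parent_add_one hx) h

lemma adj_iff : G.Adj x y ↔ (x ≠ ρ ∧ G.parent ρ x = y) ∨ G.IsDescendant ρ x 1 y := by
  constructor
  · intro hxy
    rcases hT.dist_eq_dist_add_one_of_adj ρ hxy with h | h
    · refine Or.inl ⟨?_, hT.parent_eq_of_adj hxy h.symm⟩
      rintro rfl
      simp at h
    · exact Or.inr ⟨hT.parent_eq_of_adj hxy.symm h.symm, h⟩
  · rintro (⟨hx, rfl⟩ | ⟨hyx, hy⟩)
    · exact hT.connected.adj_parent hx
    · have hyρ : y ≠ ρ := by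
        rintro rfl
        simp at hy
      exact hyx ▸ (hT.connected.adj_parent hyρ).symm

lemma exists_isDescendant_of_adj {c : W} {a : ℕ} (hx : G.IsDescendant ρ c a x)
    (hxy : G.Adj x y) : (∃ b, G.IsDescendant ρ c b y) ∨ (x = c ∧ y = G.parent ρ c) := by
  rcases (hT.adj_iff (ρ := ρ)).1 hxy with ⟨-, rfl⟩ | hy
  · cases a with
    | zero => exact Or.inr ⟨hx.1, by rw [← hx.1]; rfl⟩
    | succ a => exact Or.inl ⟨a, ((hT.connected.isDescendant_add_iff (a := 1)).1
        (by rwa [add_comm] at hx)).2⟩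
  · exact Or.inl ⟨1 + a, hy.trans hx⟩

lemma le_length_of_isDescendant {c : W} (hv : ∀ b, ¬ G.IsDescendant ρ c b v) :
    ∀ {u : W} {a : ℕ} (p : G.Walk u v), G.IsDescendant ρ c a u →
      a + 1 + G.dist (G.parent ρ c) v ≤ p.length
  | _, a, .nil, hu => absurd hu (hv a)
  | u, a, .cons (v := y) huy p, hu => by
    rw [Walk.length_cons]
    rcases hT.exists_isDescendant_of_adj hu huy with ⟨b, hy⟩ | ⟨rfl, rfl⟩
    · have := le_length_of_isDescendant hv p hy
      have := hT.dist_eq_dist_add_one_of_adj ρ huy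
      have := hu.2
      have := hy.2
      omega
    · have := G.dist_le p
      have := hu.2
      omega

theorem dist_eq_of_isDescendant {a b : ℕ} (hu : G.IsDescendant ρ w (a + 1) u)
    (hv : G.IsDescendant ρ w (b + 1) v) (hne : (G.parent ρ)^[a] u ≠ (G.parent ρ)^[b] v) :
    G.dist u v = a + b + 2 := by
  obtain ⟨hcu, hwc⟩ := hT.connected.isDescendant_add_iff.1 hu
  have hvc : ∀ b', ¬ G.IsDescendant ρ ((G.parent ρ)^[a] u) b' v := by
    intro b' hb'
    obtain rfl : b' = b := by
      have := hb'.2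
      have := hv.2
      have := hwc.2
      omega
    exact hne hb'.1.symm
  obtain ⟨p, hp⟩ := hT.connected.exists_walk_length_eq_dist u v
  have hlower := hT.le_length_of_isDescendant hvc p hcu
  rw [show G.parent ρ ((G.parent ρ)^[a] u) = w from hwc.1] at hlower
  have hwv : G.dist ρ v ≤ G.dist ρ w + G.dist w v := hT.connected.dist_triangle
  have huw := hT.connected.dist_iterate_parent_le (ρ := ρ) (v := u) (a + 1)
  have hvw := hT.connected.dist_iterate_parent_le (ρ := ρ) (v := v) (b + 1)
  rw [hu.1] at huw
  rw [hv.1, dist_comm] at hvw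
  have := hT.connected.dist_triangle (u := u) (v := w) (w := v)
  have := hv.2
  omega

end IsTree

section Finite

variable [Fintype W]

open Classical in
noncomputable def descendants (G : SimpleGraph W) (ρ w : W) (a : ℕ) : Finset W :=
  univ.filter (G.IsDescendant ρ w a)

@[simp]
lemma mem_descendants {a : ℕ} : u ∈ G.descendants ρ w a ↔ G.IsDescendant ρ w a u := by
  simp [descendants]

@[simp]
lemma descendants_zero : G.descendants ρ w 0 = {w} := by
  ext u
  simp only [mem_descendants, IsDescendant, Function.iterate_zero, id_eq, add_zero,
    mem_singleton]
  exact ⟨And.left, by rintro rfl; simp⟩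

variable [DecidableEq W]

lemma Connected.card_descendants_add (hG : G.Connected) (a b : ℕ) :
    #(G.descendants ρ w (a + b)) = ∑ c ∈ G.descendants ρ w b, #(G.descendants ρ c a) := by
  refine card_eq_sum_card_fiberwise (f := (G.parent ρ)^[a]) (fun u hu => ?_) |>.trans
    (sum_congr rfl fun c hc => congrArg card ?_)
  · simpa using (hG.isDescendant_add_iff.1 (mem_descendants.1 hu)).2
  · ext u
    simp only [mem_filter, mem_descendants, hG.isDescendant_add_iff]
    constructor
    · rintro ⟨⟨hu, -⟩, rfl⟩
      exact hu
    · intro hu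
      obtain rfl : (G.parent ρ)^[a] u = c := hu.1
      exact ⟨⟨hu, mem_descendants.1 hc⟩, rfl⟩

lemma IsTree.degree_eq_card_descendants [DecidableRel G.Adj] (hT : G.IsTree) (x : W) :
    G.degree x = #(G.descendants ρ x 1) + if x = ρ then 0 else 1 := by
  rw [← card_neighborFinset_eq_degree]
  split_ifs with hx
  · congr 1
    ext y
    simp [hT.adj_iff (ρ := ρ), hx]
  · have hpar : G.parent ρ x ∉ G.descendants ρ x 1 := by
      intro h
      have := (mem_descendants.1 h).2
      have := hT.connected.dist_parent_add_one hx
      omega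
    rw [← card_insert_of_notMem hpar]
    congr 1
    ext y
    simp [hT.adj_iff (ρ := ρ), hx, eq_comm]

noncomputable def branchPairs (G : SimpleGraph W) (ρ w : W) (a b : ℕ) : Finset (W × W) :=
  (G.descendants ρ w (a + 1) ×ˢ G.descendants ρ w (b + 1)).filter
    fun p => (G.parent ρ)^[a] p.1 ≠ (G.parent ρ)^[b] p.2

lemma Connected.card_filter_iterate_parent_eq (hG : G.Connected) (a b : ℕ) :
    #((G.descendants ρ w (a + 1) ×ˢ G.descendants ρ w (b + 1)).filter
        fun p => (G.parent ρ)^[a] p.1 = (G.parent ρ)^[b] p.2) =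
      ∑ c ∈ G.descendants ρ w 1, #(G.descendants ρ c a) * #(G.descendants ρ c b) := by
  refine card_eq_sum_card_fiberwise (f := fun p => (G.parent ρ)^[a] p.1) (fun p hp => ?_) |>.trans
    (sum_congr rfl fun c hc => (congrArg card ?_).trans (card_product _ _))
  · simp only [mem_coe, mem_filter, mem_product, mem_descendants] at hp
    simpa using (hG.isDescendant_add_iff.1 hp.1.1).2
  · have hc := mem_descendants.1 hc
    ext ⟨u, v⟩
    simp only [mem_filter, mem_product, mem_descendants]
    constructor
    · rintro ⟨⟨⟨hu, hv⟩, huv⟩, rfl⟩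
      exact ⟨(hG.isDescendant_add_iff.1 hu).1, huv ▸ (hG.isDescendant_add_iff.1 hv).1⟩
    · rintro ⟨hu, hv⟩
      exact ⟨⟨⟨hu.trans hc, hv.trans hc⟩, hu.1.trans hv.1.symm⟩, hu.1⟩

lemma pairwiseDisjoint_branchPairs (t : ℕ) :
    ((univ ×ˢ range (t - 1) : Finset (W × ℕ)) : Set (W × ℕ)).PairwiseDisjoint
      fun q => G.branchPairs ρ q.1 q.2 (t - 2 - q.2) := by
  rintro ⟨w, a⟩ ha ⟨w', a'⟩ ha' hne
  simp only [Function.onFun]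
  refine Finset.disjoint_left.2 fun ⟨u, v⟩ h h' => hne ?_
  simp only [coe_product, coe_univ, coe_range, Set.mem_prod, Set.mem_univ, Set.mem_Iio,
    true_and] at ha ha'
  simp only [branchPairs, mem_filter, mem_product, mem_descendants] at h h'
  obtain rfl : a = a' := by
    have := h.1.1.2; have := h.1.2.2; have := h'.1.1.2; have := h'.1.2.2
    omega
  exact Prod.ext (h.1.1.1.symm.trans h'.1.1.1) rfl

lemma IsTree.filter_dist_eq_biUnion (hT : G.IsTree) {t : ℕ} (ht : ∀ v, G.dist ρ v < t) :
    ({p : W × W | G.dist p.1 p.2 = t} : Finset _) =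
      (univ ×ˢ range (t - 1)).biUnion fun q => G.branchPairs ρ q.1 q.2 (t - 2 - q.2) := by
  ext ⟨u, v⟩
  simp only [mem_filter, mem_univ, true_and, mem_biUnion, mem_product, mem_range, branchPairs,
    mem_descendants, Prod.exists]
  constructor
  · intro huv
    rcases hT.connected.exists_ancestor_or_branch (ρ := ρ) u v with
      ⟨i, hi, rfl⟩ | ⟨i, hi, rfl⟩ | ⟨w, a, b, hu, hv, hne⟩
    · have := hT.connected.dist_iterate_parent_le (ρ := ρ) (v := v) i
      rw [dist_comm] at this
      have := ht v
      omega
    · have := hT.connected.dist_iterate_parent_le (ρ := ρ) (v := u) i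
      have := ht u
      omega
    · have hd := hT.dist_eq_of_isDescendant hu hv hne
      obtain rfl : b = t - 2 - a := by omega
      exact ⟨w, a, by omega, ⟨hu, hv⟩, hne⟩
  · rintro ⟨w, a, ha, ⟨hu, hv⟩, hne⟩
    have := hT.dist_eq_of_isDescendant hu hv hne
    omega

lemma IsTree.card_filter_dist_eq (hT : G.IsTree) {t : ℕ} (ht : ∀ v, G.dist ρ v < t) :
    #({p : W × W | G.dist p.1 p.2 = t} : Finset _) =
      ∑ w, ∑ a ∈ range (t - 1), #(G.branchPairs ρ w a (t - 2 - a)) := by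
  rw [hT.filter_dist_eq_biUnion ht, card_biUnion (pairwiseDisjoint_branchPairs t), sum_product]

end Finite

end SimpleGraph

namespace IsPerfectRootedMary

variable {m r : ℕ} {W : Type} [Fintype W] [DecidableEq W] {G : SimpleGraph W} [DecidableRel G.Adj]
  {ρ w x : W} (hG : IsPerfectRootedMary m r G ρ)
include hG

lemma card_descendants_one (hx : G.dist ρ x < r) : #(G.descendants ρ x 1) = m := by
  have hdeg := hG.1.degree_eq_card_descendants (ρ := ρ) x
  by_cases hxρ : x = ρ
  · subst hxρ
    rw [hG.2.1 (by omega)] at hdeg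
    simpa using hdeg.symm
  · rcases hG.2.2.1 x hxρ with h | h
    · have := hG.2.2.2.2.2 x h
      omega
    · simp only [hxρ, if_false] at hdeg
      omega

lemma card_descendants {a : ℕ} (h : G.dist ρ w + a ≤ r) : #(G.descendants ρ w a) = m ^ a := by
  induction a with
  | zero => simp
  | succ a ih =>
    rw [add_comm, hG.1.connected.card_descendants_add, sum_congr rfl fun c hc =>
      hG.card_descendants_one (by have := (mem_descendants.1 hc).2; omega),
      sum_const, smul_eq_mul, ih (by omega), add_comm, pow_succ]

lemma sum_comp_dist (f : ℕ → ℕ) :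
    ∑ x, f (G.dist ρ x) = ∑ d ∈ range (r + 1), m ^ d * f d := by
  rw [← sum_fiberwise_of_maps_to (g := G.dist ρ) (t := range (r + 1))
    (fun x _ => mem_range.2 (Nat.lt_succ_of_le (hG.2.2.2.1 x)))]
  refine sum_congr rfl fun d hd => ?_
  have hlevel : ({x | G.dist ρ x = d} : Finset W) = G.descendants ρ ρ d := by
    ext x
    simp only [mem_filter, mem_univ, true_and, mem_descendants, IsDescendant, dist_self,
      zero_add]
    exact ⟨fun hx => ⟨hx ▸ hG.1.connected.iterate_parent_dist, hx⟩, And.right⟩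
  rw [sum_congr rfl fun x hx => by rw [(mem_filter.1 hx).2], sum_const, smul_eq_mul, hlevel,
    hG.card_descendants (by simpa using mem_range_succ_iff.1 hd)]

lemma card_branchPairs (a b : ℕ) :
    #(G.branchPairs ρ w a b) = if G.dist ρ w + a + 1 ≤ r ∧ G.dist ρ w + b + 1 ≤ r then
      m ^ (a + b + 2) - m ^ (a + b + 1) else 0 := by
  split_ifs with h
  · have hsplit := card_filter_add_card_filter_not
      (s := G.descendants ρ w (a + 1) ×ˢ G.descendants ρ w (b + 1))
      (fun p => (G.parent ρ)^[a] p.1 = (G.parent ρ)^[b] p.2)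
    rw [hG.1.connected.card_filter_iterate_parent_eq, card_product,
      hG.card_descendants (by omega), hG.card_descendants (by omega),
      sum_congr rfl fun c hc => by
        have := (mem_descendants.1 hc).2
        rw [hG.card_descendants (by omega), hG.card_descendants (by omega)],
      sum_const, smul_eq_mul, hG.card_descendants_one (by omega)] at hsplit
    have e1 : m ^ (a + 1) * m ^ (b + 1) = m ^ (a + b + 2) := by ring
    have e2 : m * (m ^ a * m ^ b) = m ^ (a + b + 1) := by ring
    rw [branchPairs, ← e1, ← e2, ← hsplit, Nat.add_sub_cancel_left]
  · rw [card_eq_zero, branchPairs, filter_eq_empty_iff]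
    rintro ⟨u, v⟩ huv
    simp only [mem_product, mem_descendants] at huv
    have := hG.2.2.2.1 u
    have := hG.2.2.2.1 v
    have := huv.1.2
    have := huv.2.2
    omega

lemma card_filter_dist_eq {t : ℕ} (hrt : r < t) :
    #({p : W × W | G.dist p.1 p.2 = t} : Finset _) =
      ∑ d ∈ range (r + 1), m ^ d * ((r - d - (t - 1 - (r - d))) * (m ^ t - m ^ (t - 1))) := by
  rw [hG.1.card_filter_dist_eq fun v => (hG.2.2.2.1 v).trans_lt hrt, ← hG.sum_comp_dist]
  refine sum_congr rfl fun w _ => ?_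
  have hw := hG.2.2.2.1 w
  have hterm : ∀ a ∈ range (t - 1), #(G.branchPairs ρ w a (t - 2 - a)) =
      if G.dist ρ w + a + 1 ≤ r ∧ G.dist ρ w + (t - 2 - a) + 1 ≤ r then
        m ^ t - m ^ (t - 1) else 0 := by
    intro a ha
    have ha := mem_range.1 ha
    rw [hG.card_branchPairs, show a + (t - 2 - a) + 2 = t by omega,
      show a + (t - 2 - a) + 1 = t - 1 by omega]
  have hIco : (range (t - 1)).filter
      (fun a => G.dist ρ w + a + 1 ≤ r ∧ G.dist ρ w + (t - 2 - a) + 1 ≤ r) =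
      Ico (t - 1 - (r - G.dist ρ w)) (r - G.dist ρ w) := by
    ext a
    simp only [mem_filter, mem_range, mem_Ico]
    omega
  rw [sum_congr rfl hterm, ← sum_filter, hIco, sum_const, smul_eq_mul, Nat.card_Ico]

lemma pathCount_eq {k : ℕ} (hkr : k ≤ r) (hr : r < 2 * k - 1) :
    pathCount G (2 * k - 1) =
      (m ^ (2 * k - 1) - m ^ (2 * k - 2)) *
        ∑ d ∈ range (r - k + 1), m ^ d * (r - k + 1 - d) := by
  have h2 := (two_mul_pathCount G (by omega)).trans (hG.card_filter_dist_eq hr)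
  have hcoeff : ∀ d ∈ range (r + 1),
      m ^ d * ((r - d - (2 * k - 1 - 1 - (r - d))) * (m ^ (2 * k - 1) - m ^ (2 * k - 1 - 1))) =
        2 * (m ^ (2 * k - 1) - m ^ (2 * k - 2)) * (m ^ d * (r - k + 1 - d)) := fun d _ => by
    rw [show r - d - (2 * k - 1 - 1 - (r - d)) = 2 * (r - k + 1 - d) by omega,
      show 2 * k - 1 - 1 = 2 * k - 2 by omega]
    ring
  rw [sum_congr rfl hcoeff, ← mul_sum,
    ← sum_range_add_sum_Ico _ (by omega : r - k + 1 ≤ r + 1),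
    sum_eq_zero (s := Ico _ _) fun d hd => by rw [Nat.sub_eq_zero_of_le (mem_Ico.1 hd).1, mul_zero],
    add_zero, mul_assoc] at h2
  exact Nat.eq_of_mul_eq_mul_left two_pos h2

end IsPerfectRootedMary

theorem rooted_odd_paths_small_depth_general (m k r : ℕ) (hm : 2 ≤ m)
    (hkr : k ≤ r) (hr : r < 2 * k - 1)
    {W : Type} [Fintype W] [DecidableEq W] (G : SimpleGraph W) [DecidableRel G.Adj]
    (ρ : W) (hG : IsPerfectRootedMary m r G ρ) :
    (pathCount G (2 * k - 1) : ℚ) =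
      (m : ℚ) ^ (2 * k - 2) *
        (((m : ℚ) ^ (r - k + 2) - 1) / ((m : ℚ) - 1) - ((r : ℚ) - (k : ℚ) + 2)) := by
  have hm1 : (m : ℚ) - 1 ≠ 0 := by
    have : (2 : ℚ) ≤ m := by exact_mod_cast hm
    linarith
  have hpow : m ^ (2 * k - 1) = m ^ (2 * k - 2) * m := by
    rw [← pow_succ]; congr 1; omega
  have hcast : ((r - k : ℕ) : ℚ) = r - k := Nat.cast_sub hkr
  rw [hG.pathCount_eq hkr hr, hpow, ← Nat.mul_sub_one]
  have hsum : ∑ d ∈ range (r - k + 1), (m : ℚ) ^ d * ((r - k + 1 - d : ℕ) : ℚ) =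
      ∑ d ∈ range (r - k + 1), (m : ℚ) ^ d * ((r - k : ℕ) + 1 - d) :=
    sum_congr rfl fun d hd => by push_cast [Nat.cast_sub (mem_range_le hd)]; rfl
  push_cast [Nat.cast_sub (Nat.one_le_of_lt hm)]
  rw [hsum]
  have key := sub_one_sq_mul_sum_range_pow_mul (m : ℚ) (r - k)
  rw [hcast] at key ⊢
  field_simp
  linear_combination key

theorem rooted_odd_paths_small_depth (m k r : ℕ) (hm : 2 ≤ m)
    (hk : 1 ≤ k) (hkr : k ≤ r) (hr : r < 2 * k - 1)
    {W : Type} [Fintype W] [DecidableEq W] (G : SimpleGraph W) [DecidableRel G.Adj]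
    (ρ : W) (hG : IsPerfectRootedMary m r G ρ) :
    (pathCount G (2 * k - 1) : ℚ) =
      (m : ℚ) ^ (2 * k - 2) *
        (((m : ℚ) ^ (r - k + 2) - 1) / ((m : ℚ) - 1) - ((r : ℚ) - (k : ℚ) + 2)) :=
  rooted_odd_paths_small_depth_general m k r hm hkr hr G ρ hG
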